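/- arXiv:1210.1808 — 7 statements merged into one kernel-verified Lean document; each statement's English description precedes it below -/
import Mathlib

section
/- Let d ≥ 1 be an integer and let r > d/2 be a real number. There exists a constant C > 0, depending only on d and r, with the following property: for every countable collection of points X = (x_k)_{k∈ℕ} in ℝ^d whose fill distance h_X := sup_{x∈ℝ^d} inf_{k∈ℕ} ‖x − x_k‖ satisfies 0 < h_X < ∞, one has ∑_{k : ‖x_k‖ ≥ 2 h_X} ‖x_k‖^{−2r} ≥ C · h_X^{−2r}. -/
open scoped ENNReal

/-- Let `d ≥ 1` and `r > d/2`. There is a constant `C > 0` depending only on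
`d` and `r` such that for every countable point collection `X : ℕ → ℝ^d` whose fill distance
`h = ⨆ x, ⨅ k, edist x (X k)` satisfies `0 < h < ∞`, one has
`∑_{k : ‖X k‖ ≥ 2h} ‖X k‖^(-2r) ≥ C · h^(-2r)` (the sum taken in `[0,∞]`). -/
theorem stmt_0 (d : ℕ) (hd : 1 ≤ d) (r : ℝ) (hr : (d : ℝ) / 2 < r) :
    ∃ C : ℝ, 0 < C ∧
      ∀ X : ℕ → EuclideanSpace ℝ (Fin d), ∀ h : ℝ≥0∞,
        h = ⨆ x : EuclideanSpace ℝ (Fin d), ⨅ k : ℕ, edist x (X k) →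
        0 < h → h < ⊤ →
        ENNReal.ofReal (C * h.toReal ^ (-(2 * r))) ≤
          ∑' k : {k : ℕ // 2 * h.toReal ≤ ‖X k‖}, ENNReal.ofReal (‖X k.1‖ ^ (-(2 * r))) := by
  refine ⟨(5 : ℝ) ^ (-(2 * r)), Real.rpow_pos_of_pos (by norm_num) _, ?_⟩
  intro X h hX hpos htop
  set t := h.toReal with ht
  have htpos : 0 < t := ENNReal.toReal_pos hpos.ne' htop.ne
  -- pick a point x of norm 3.5 t
  set x : EuclideanSpace ℝ (Fin d) :=
    EuclideanSpace.single ⟨0, hd⟩ ((7 / 2 : ℝ) * t) with hxdef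
  have hxnorm : ‖x‖ = (7 / 2) * t := by
    rw [hxdef, EuclideanSpace.norm_single, Real.norm_eq_abs, abs_of_pos (by positivity)]
  have hinf : (⨅ k : ℕ, edist x (X k)) ≤ h := by
    rw [hX]; exact le_iSup (fun y : EuclideanSpace ℝ (Fin d) => ⨅ k : ℕ, edist y (X k)) x
  have hlt : (⨅ k : ℕ, edist x (X k)) < ENNReal.ofReal ((3 / 2) * t) := by
    refine lt_of_le_of_lt hinf ?_
    have : h = ENNReal.ofReal t := (ENNReal.ofReal_toReal htop.ne).symm
    rw [this]
    exact ENNReal.ofReal_lt_ofReal_iff (by positivity) |>.mpr (by nlinarith)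
  obtain ⟨k, hk⟩ := iInf_lt_iff.mp hlt
  have hdist : dist x (X k) < (3 / 2) * t := by
    rw [edist_dist] at hk
    exact (ENNReal.ofReal_lt_ofReal_iff (by positivity)).mp hk
  have hlb : 2 * t ≤ ‖X k‖ := by
    have h1 : ‖x‖ - ‖X k‖ ≤ ‖x - X k‖ := norm_sub_norm_le x (X k)
    rw [← dist_eq_norm] at h1
    nlinarith [hxnorm]
  have hub : ‖X k‖ ≤ 5 * t := by
    have h1 : ‖X k‖ - ‖x‖ ≤ ‖X k - x‖ := norm_sub_norm_le (X k) x
    rw [← dist_eq_norm, dist_comm] at h1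
    nlinarith [hxnorm]
  have hXkpos : 0 < ‖X k‖ := lt_of_lt_of_le (by positivity) hlb
  have key : (5 : ℝ) ^ (-(2 * r)) * t ^ (-(2 * r)) ≤ ‖X k‖ ^ (-(2 * r)) := by
    have h5t : (5 * t : ℝ) ^ (-(2 * r)) ≤ ‖X k‖ ^ (-(2 * r)) :=
      Real.rpow_le_rpow_of_nonpos hXkpos hub (by have : (0:ℝ) < r := lt_of_le_of_lt (div_nonneg (Nat.cast_nonneg d) two_pos.le) hr; linarith)
    calc (5 : ℝ) ^ (-(2 * r)) * t ^ (-(2 * r)) = (5 * t) ^ (-(2 * r)) :=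
          (Real.mul_rpow (by norm_num) htpos.le).symm
      _ ≤ ‖X k‖ ^ (-(2 * r)) := h5t
  calc ENNReal.ofReal ((5 : ℝ) ^ (-(2 * r)) * t ^ (-(2 * r)))
      ≤ ENNReal.ofReal (‖X k‖ ^ (-(2 * r))) := ENNReal.ofReal_le_ofReal key
    _ ≤ ∑' k : {k : ℕ // 2 * t ≤ ‖X k‖}, ENNReal.ofReal (‖X k.1‖ ^ (-(2 * r))) :=
        ENNReal.le_tsum (⟨k, hlb⟩ : {k : ℕ // 2 * t ≤ ‖X k‖})
end

section
/- Let d ≥ 1 be an integer and let r > d/2 be a real number. There exists a constant C > 0, depending only on d and r, with the following property: for every countable collection of points X = (x_k)_{k∈ℕ} in ℝ^d whose separation radius q_X := (1/2) inf_{k≠k'} ‖x_k − x_{k'}‖ is strictly positive and which satisfies ‖x_k‖ ≥ q_X/2 for every k, one has ∑_{k∈ℕ} ‖x_k‖^{−2r} ≤ C · q_X^{−2r}. -/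
open scoped ENNReal

open Metric MeasureTheory Set

/-- Let `d ≥ 1` and `r > d/2`. There is a constant `C > 0` depending only on
`d` and `r` such that for every countable point collection `X : ℕ → ℝ^d` whose separation
radius `q = (1/2) ⨅_{k ≠ k'} ‖X k - X k'‖` is strictly positive and which satisfies
`‖X k‖ ≥ q/2` for every `k`, one has `∑_k ‖X k‖^(-2r) ≤ C · q^(-2r)`. -/
theorem stmt_1 (d : ℕ) (hd : 1 ≤ d) (r : ℝ) (hr : (d : ℝ) / 2 < r) :
    ∃ C : ℝ, 0 < C ∧
      ∀ X : ℕ → EuclideanSpace ℝ (Fin d), ∀ q : ℝ,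
        q = (1 / 2) * ⨅ p : {p : ℕ × ℕ // p.1 ≠ p.2}, ‖X p.1.1 - X p.1.2‖ →
        0 < q →
        (∀ k : ℕ, q / 2 ≤ ‖X k‖) →
        ∑' k : ℕ, ENNReal.ofReal (‖X k‖ ^ (-(2 * r))) ≤
          ENNReal.ofReal (C * q ^ (-(2 * r))) := by
  set ρ : ℝ := (2 : ℝ) ^ ((d : ℝ) - 2 * r) with hρ_def
  have hρ0 : 0 < ρ := Real.rpow_pos_of_pos two_pos _
  have hρ1 : ρ < 1 := Real.rpow_lt_one_of_one_lt_of_neg one_lt_two (by linarith)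
  have h1ρ : 0 < 1 - ρ := by linarith
  refine ⟨(2 : ℝ) ^ d * (2 : ℝ) ^ (2 * r) * (1 - ρ)⁻¹, by positivity, ?_⟩
  intro X q hqdef hq0 hlow
  have hd1 : (1 : ℝ) ≤ (d : ℝ) := Nat.one_le_cast.mpr hd
  have hr0 : 0 < r := by linarith

  set f : ℕ → ℝ≥0∞ := fun k => ENNReal.ofReal (‖X k‖ ^ (-(2 * r))) with hf_def
  -- separation
  have hsep : ∀ k k' : ℕ, k ≠ k' → 2 * q ≤ ‖X k - X k'‖ := by
    intro k k' hkk'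
    have hbdd : BddBelow (Set.range fun p : {p : ℕ × ℕ // p.1 ≠ p.2} =>
        ‖X p.1.1 - X p.1.2‖) := ⟨0, by rintro _ ⟨p, rfl⟩; positivity⟩
    have := ciInf_le hbdd (⟨(k, k'), hkk'⟩ : {p : ℕ × ℕ // p.1 ≠ p.2})
    calc 2 * q = ⨅ p : {p : ℕ × ℕ // p.1 ≠ p.2}, ‖X p.1.1 - X p.1.2‖ := by
          rw [hqdef]; ring
      _ ≤ ‖X k - X k'‖ := this
  -- disjoint balls
  set B : ℕ → Set (EuclideanSpace ℝ (Fin d)) := fun k => Metric.ball (X k) q with hB_def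
  have hdisj : Pairwise (Function.onFun Disjoint B) := by
    intro k k' hkk'
    apply Metric.ball_disjoint_ball
    rw [dist_eq_norm]
    linarith [hsep k k' hkk']
  -- dyadic annuli
  set A : ℕ → Set ℕ := fun j =>
    {k : ℕ | (2 : ℝ) ^ j * (q / 2) ≤ ‖X k‖ ∧ ‖X k‖ < (2 : ℝ) ^ (j + 1) * (q / 2)} with hA_def
  have hq2 : (0 : ℝ) < q / 2 := by linarith
  have hcover : (Set.univ : Set ℕ) = ⋃ j, A j := by
    ext k
    simp only [Set.mem_univ, true_iff, Set.mem_iUnion]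
    set t : ℝ := ‖X k‖ / (q / 2) with ht_def
    have ht1 : 1 ≤ t := (one_le_div hq2).2 (hlow k)
    have ht0 : 0 < t := lt_of_lt_of_le one_pos ht1
    refine ⟨⌊Real.logb 2 t⌋₊, ?_, ?_⟩
    · have h1 : ((⌊Real.logb 2 t⌋₊ : ℝ)) ≤ Real.logb 2 t :=
        Nat.floor_le (Real.logb_nonneg one_lt_two ht1)
      have : (2 : ℝ) ^ (⌊Real.logb 2 t⌋₊ : ℝ) ≤ t := by
        calc (2 : ℝ) ^ (⌊Real.logb 2 t⌋₊ : ℝ) ≤ (2 : ℝ) ^ Real.logb 2 t :=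
              Real.rpow_le_rpow_of_exponent_le one_le_two h1
          _ = t := Real.rpow_logb two_pos (by norm_num) ht0
      rw [Real.rpow_natCast] at this
      calc (2 : ℝ) ^ ⌊Real.logb 2 t⌋₊ * (q / 2) ≤ t * (q / 2) := by
            apply mul_le_mul_of_nonneg_right this hq2.le
        _ = ‖X k‖ := by rw [ht_def]; field_simp
    · have h2 : Real.logb 2 t < (⌊Real.logb 2 t⌋₊ : ℝ) + 1 := Nat.lt_floor_add_one _
      have : t < (2 : ℝ) ^ ((⌊Real.logb 2 t⌋₊ : ℝ) + 1) := by
        calc t = (2 : ℝ) ^ Real.logb 2 t := (Real.rpow_logb two_pos (by norm_num) ht0).symm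
          _ < (2 : ℝ) ^ ((⌊Real.logb 2 t⌋₊ : ℝ) + 1) :=
              Real.rpow_lt_rpow_of_exponent_lt one_lt_two h2
      have heq : ((⌊Real.logb 2 t⌋₊ : ℝ) + 1) = ((⌊Real.logb 2 t⌋₊ + 1 : ℕ) : ℝ) := by
        push_cast; ring
      rw [heq, Real.rpow_natCast] at this
      calc ‖X k‖ = t * (q / 2) := by rw [ht_def]; field_simp
        _ < (2 : ℝ) ^ (⌊Real.logb 2 t⌋₊ + 1) * (q / 2) := by
            apply mul_lt_mul_of_pos_right this hq2
  -- volume facts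
  set u : ℝ≥0∞ := volume (Metric.ball (0 : EuclideanSpace ℝ (Fin d)) 1) with hu_def
  have hu0 : u ≠ 0 := (measure_ball_pos volume _ one_pos).ne'
  have hut : u ≠ ⊤ := measure_ball_lt_top.ne
  have hfinrank : Module.finrank ℝ (EuclideanSpace ℝ (Fin d)) = d := finrank_euclideanSpace_fin
  have hvol : ∀ (x : EuclideanSpace ℝ (Fin d)) {s : ℝ}, 0 < s →
      volume (Metric.ball x s) = ENNReal.ofReal (s ^ d) * u := by
    intro x s hs
    rw [Measure.addHaar_ball_of_pos volume x hs, hfinrank]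
  -- per-annulus bound
  have hAj : ∀ j : ℕ, ∑' k : A j, f k ≤
      ENNReal.ofReal (((2 : ℝ) ^ (j + 1)) ^ d * ((2 : ℝ) ^ j * (q / 2)) ^ (-(2 * r))) := by
    intro j
    have hbase : (0 : ℝ) < (2 : ℝ) ^ j * (q / 2) := by positivity
    set N : ℝ≥0∞ := ∑' _ : A j, (1 : ℝ≥0∞) with hN_def
    set c : ℝ≥0∞ := ENNReal.ofReal (((2 : ℝ) ^ j * (q / 2)) ^ (-(2 * r))) with hc_def
    have step1 : ∑' k : A j, f k ≤ N * c := by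
      have h1 : ∑' k : A j, f k ≤ ∑' _ : A j, c := by
        apply ENNReal.tsum_le_tsum
        intro k
        apply ENNReal.ofReal_le_ofReal
        exact Real.rpow_le_rpow_of_nonpos hbase k.2.1 (by linarith : -(2 * r) ≤ 0)
      have h2 : ∑' _ : A j, c = N * c := by
        rw [hN_def, ← ENNReal.tsum_mul_right]
        simp
      rw [← h2]; exact h1
    -- counting bound
    have hcount : N ≤ ENNReal.ofReal (((2 : ℝ) ^ (j + 1)) ^ d) := by
      have hRpos : (0 : ℝ) < (2 : ℝ) ^ (j + 1) * q := by positivity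
      have hsub : (⋃ k : A j, B (k : ℕ)) ⊆ Metric.ball (0 : EuclideanSpace ℝ (Fin d)) ((2 : ℝ) ^ (j + 1) * q) := by
        rintro y hy
        simp only [Set.mem_iUnion] at hy
        obtain ⟨k, hk⟩ := hy
        rw [mem_ball_iff_norm] at hk ⊢
        have h2pow : (2 : ℝ) ≤ (2 : ℝ) ^ (j + 1) := by
          calc (2:ℝ) = 2 ^ 1 := by norm_num
            _ ≤ 2 ^ (j + 1) := by
              apply pow_le_pow_right₀ one_le_two
              omega
        have hXk := k.2.2
        have : ‖y‖ ≤ ‖y - X (k : ℕ)‖ + ‖X (k : ℕ)‖ := by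
          simpa using norm_add_le (y - X (k : ℕ)) (X (k : ℕ))
        rw [sub_zero]
        nlinarith [norm_nonneg (X (k : ℕ))]
      have hmeas : volume (⋃ k : A j, B (k : ℕ)) = ∑' k : A j, volume (B (k : ℕ)) := by
        apply measure_iUnion
        · intro k k' hkk'
          exact hdisj (Subtype.coe_injective.ne hkk')
        · intro k; exact measurableSet_ball
      have hsum_eq : ∑' k : A j, volume (B (k : ℕ)) = N * (ENNReal.ofReal (q ^ d) * u) := by
        have : ∀ k : A j, volume (B (k : ℕ)) = ENNReal.ofReal (q ^ d) * u :=
          fun k => hvol _ hq0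
        rw [tsum_congr this, hN_def, ← ENNReal.tsum_mul_right]
        simp
      have hchain : N * (ENNReal.ofReal (q ^ d) * u) ≤
          ENNReal.ofReal (((2 : ℝ) ^ (j + 1)) ^ d) * (ENNReal.ofReal (q ^ d) * u) := by
        calc N * (ENNReal.ofReal (q ^ d) * u) = volume (⋃ k : A j, B (k : ℕ)) := by
              rw [hmeas, hsum_eq]
          _ ≤ volume (Metric.ball (0 : EuclideanSpace ℝ (Fin d)) ((2 : ℝ) ^ (j + 1) * q)) := measure_mono hsub
          _ = ENNReal.ofReal (((2 : ℝ) ^ (j + 1) * q) ^ d) * u := hvol _ hRpos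
          _ = ENNReal.ofReal (((2 : ℝ) ^ (j + 1)) ^ d) * (ENNReal.ofReal (q ^ d) * u) := by
              rw [mul_pow, ENNReal.ofReal_mul (by positivity), mul_assoc]
      have hw0 : ENNReal.ofReal (q ^ d) * u ≠ 0 := by
        apply mul_ne_zero _ hu0
        simp only [ne_eq, ENNReal.ofReal_eq_zero, not_le]
        positivity
      have hwt : ENNReal.ofReal (q ^ d) * u ≠ ⊤ := ENNReal.mul_ne_top ENNReal.ofReal_ne_top hut
      exact (ENNReal.mul_le_mul_iff_left hw0 hwt).1 hchain
    calc ∑' k : A j, f k ≤ N * c := step1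
      _ ≤ ENNReal.ofReal (((2 : ℝ) ^ (j + 1)) ^ d) * c := mul_le_mul_left hcount c
      _ = ENNReal.ofReal (((2 : ℝ) ^ (j + 1)) ^ d * ((2 : ℝ) ^ j * (q / 2)) ^ (-(2 * r))) := by
          rw [hc_def, ← ENNReal.ofReal_mul (by positivity)]
  -- geometric structure of the bound
  set K : ℝ := (2 : ℝ) ^ d * (q / 2) ^ (-(2 * r)) with hK_def
  have hgeom : ∀ j : ℕ,
      ((2 : ℝ) ^ (j + 1)) ^ d * ((2 : ℝ) ^ j * (q / 2)) ^ (-(2 * r)) = K * ρ ^ j := by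
    intro j
    have h2j : (0 : ℝ) < (2 : ℝ) ^ j := by positivity
    have h1 : ((2 : ℝ) ^ j * (q / 2)) ^ (-(2 * r)) =
        ((2 : ℝ) ^ j) ^ (-(2 * r)) * (q / 2) ^ (-(2 * r)) :=
      Real.mul_rpow (by positivity) (by positivity)
    have h2 : ((2 : ℝ) ^ (j + 1)) ^ d = (2 : ℝ) ^ d * ((2 : ℝ) ^ j) ^ ((d : ℕ) : ℝ) := by
      rw [Real.rpow_natCast, pow_succ, mul_comm ((2:ℝ)^j) 2, mul_pow]
    have h3 : ((2 : ℝ) ^ j) ^ ((d : ℕ) : ℝ) * ((2 : ℝ) ^ j) ^ (-(2 * r)) =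
        ((2 : ℝ) ^ j) ^ ((d : ℝ) - 2 * r) := by
      rw [← Real.rpow_add h2j]; congr 1
    have h4 : ((2 : ℝ) ^ j) ^ ((d : ℝ) - 2 * r) = ρ ^ j := by
      rw [← Real.rpow_natCast (2 : ℝ) j, ← Real.rpow_mul (by norm_num), mul_comm,
        Real.rpow_mul (by norm_num), Real.rpow_natCast]
    calc ((2 : ℝ) ^ (j + 1)) ^ d * ((2 : ℝ) ^ j * (q / 2)) ^ (-(2 * r))
        = (2 : ℝ) ^ d * (((2 : ℝ) ^ j) ^ ((d : ℕ) : ℝ) * ((2 : ℝ) ^ j) ^ (-(2 * r))) *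
            (q / 2) ^ (-(2 * r)) := by rw [h1, h2]; ring
      _ = (2 : ℝ) ^ d * (ρ ^ j) * (q / 2) ^ (-(2 * r)) := by rw [h3, h4]
      _ = K * ρ ^ j := by rw [hK_def]; ring
  have hsummable : Summable (fun j : ℕ => K * ρ ^ j) :=
    (summable_geometric_of_lt_one hρ0.le hρ1).mul_left K
  have htsum_geom : ∑' j : ℕ, K * ρ ^ j = K * (1 - ρ)⁻¹ := by
    rw [tsum_mul_left, tsum_geometric_of_lt_one hρ0.le hρ1]
  -- final real bound
  have hfinal : K * (1 - ρ)⁻¹ ≤ (2 : ℝ) ^ d * (2 : ℝ) ^ (2 * r) * (1 - ρ)⁻¹ * q ^ (-(2 * r)) := by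
    have hq2r : (q / 2) ^ (-(2 * r)) = q ^ (-(2 * r)) * (2 : ℝ) ^ (2 * r) := by
      rw [Real.div_rpow hq0.le (by norm_num : (0:ℝ) ≤ 2), div_eq_mul_inv,
        ← Real.rpow_neg (by norm_num : (0:ℝ) ≤ 2), neg_neg]
    rw [hK_def, hq2r]; ring_nf; rfl
  -- put it all together
  calc ∑' k : ℕ, ENNReal.ofReal (‖X k‖ ^ (-(2 * r)))
      = ∑' k : (Set.univ : Set ℕ), f k := (tsum_univ f).symm
    _ = ∑' k : (⋃ j, A j), f k := by rw [hcover]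
    _ ≤ ∑' j : ℕ, ∑' k : A j, f k := ENNReal.tsum_iUnion_le_tsum f A
    _ ≤ ∑' j : ℕ, ENNReal.ofReal
          (((2 : ℝ) ^ (j + 1)) ^ d * ((2 : ℝ) ^ j * (q / 2)) ^ (-(2 * r))) :=
        ENNReal.tsum_le_tsum hAj
    _ = ∑' j : ℕ, ENNReal.ofReal (K * ρ ^ j) := by
        apply tsum_congr; intro j; rw [hgeom j]
    _ = ENNReal.ofReal (∑' j : ℕ, K * ρ ^ j) := by
        rw [ENNReal.ofReal_tsum_of_nonneg (fun j => by positivity) hsummable]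
    _ = ENNReal.ofReal (K * (1 - ρ)⁻¹) := by rw [htsum_geom]
    _ ≤ ENNReal.ofReal ((2 : ℝ) ^ d * (2 : ℝ) ^ (2 * r) * (1 - ρ)⁻¹ * q ^ (-(2 * r))) :=
        ENNReal.ofReal_le_ofReal hfinal
end

section
/- Let N ≥ 2 be an integer. There exists a constant C > 0, depending only on N, such that for every function c : {0,…,N−1} → [0,∞) and every vector α = (α_0,…,α_{N−1}) ∈ ℂ^N with ‖α‖ = 1 and ∑_{m=0}^{N−1} α_m = 0, one has ∑_{m=0}^{N−1} c(m) |α_m|² ≥ C · max_{m₀∈{0,…,N−1}} min_{m ≠ m₀} c(m). -/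
/-!
If `∑ α = 0`, then `α m₀ = -∑_{m ≠ m₀} α m`, so by the triangle and Cauchy–Schwarz inequalities
`‖α m₀‖² ≤ (N - 1) ∑_{m ≠ m₀} ‖α m‖²`. Hence at least a fraction `1/N` of `‖α‖²` lives off any
single index `m₀`, and there every weight `c m` is at least `min_{m ≠ m₀} c m`; so `C = 1/N` works.
-/

open Finset

section ZeroSum

variable {ι E : Type*} [Fintype ι] [DecidableEq ι] [SeminormedAddCommGroup E]

lemma sq_norm_le_card_erase_mul_sum_erase_of_sum_eq_zero {α : ι → E} (hα : ∑ m, α m = 0)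
    (m₀ : ι) :
    ‖α m₀‖ ^ 2 ≤ #(univ.erase m₀) * ∑ m ∈ univ.erase m₀, ‖α m‖ ^ 2 := by
  have hα₀ : α m₀ = -∑ m ∈ univ.erase m₀, α m := by
    rw [sum_erase_eq_sub (mem_univ m₀), hα, zero_sub, neg_neg]
  have hle : ‖α m₀‖ ≤ ∑ m ∈ univ.erase m₀, ‖α m‖ := by
    rw [hα₀, norm_neg]
    exact norm_sum_le _ _
  calc ‖α m₀‖ ^ 2 ≤ (∑ m ∈ univ.erase m₀, ‖α m‖) ^ 2 := by gcongr
    _ ≤ #(univ.erase m₀) * ∑ m ∈ univ.erase m₀, ‖α m‖ ^ 2 := sq_sum_le_card_mul_sum_sq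

lemma sum_sq_norm_le_card_mul_sum_erase_of_sum_eq_zero {α : ι → E} (hα : ∑ m, α m = 0)
    (m₀ : ι) :
    ∑ m, ‖α m‖ ^ 2 ≤ Fintype.card ι * ∑ m ∈ univ.erase m₀, ‖α m‖ ^ 2 := by
  have h := sq_norm_le_card_erase_mul_sum_erase_of_sum_eq_zero hα m₀
  rw [cast_card_erase_of_mem (mem_univ m₀), card_univ] at h
  rw [← add_sum_erase _ _ (mem_univ m₀)]
  linarith

lemma inf'_erase_mul_sum_sq_norm_le_of_sum_eq_zero {c : ι → ℝ} (hc : ∀ m, 0 ≤ c m)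
    {α : ι → E} (hα : ∑ m, α m = 0) (m₀ : ι) (hne : (univ.erase m₀).Nonempty) :
    (univ.erase m₀).inf' hne c * ∑ m, ‖α m‖ ^ 2 ≤ Fintype.card ι * ∑ m, c m * ‖α m‖ ^ 2 := by
  set t := (univ.erase m₀).inf' hne c
  have ht : 0 ≤ t := (le_inf'_iff hne c).mpr fun m _ => hc m
  have hweight : t * ∑ m ∈ univ.erase m₀, ‖α m‖ ^ 2 ≤ ∑ m, c m * ‖α m‖ ^ 2 :=
    calc t * ∑ m ∈ univ.erase m₀, ‖α m‖ ^ 2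
        ≤ ∑ m ∈ univ.erase m₀, c m * ‖α m‖ ^ 2 := by
          rw [mul_sum]
          exact sum_le_sum fun m hm => by gcongr; exact inf'_le c hm
      _ ≤ ∑ m, c m * ‖α m‖ ^ 2 :=
          sum_le_sum_of_subset_of_nonneg (erase_subset _ _) fun m _ _ => by
            have := hc m; positivity
  calc t * ∑ m, ‖α m‖ ^ 2
      ≤ t * (Fintype.card ι * ∑ m ∈ univ.erase m₀, ‖α m‖ ^ 2) :=
        mul_le_mul_of_nonneg_left (sum_sq_norm_le_card_mul_sum_erase_of_sum_eq_zero hα m₀) ht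
    _ = Fintype.card ι * (t * ∑ m ∈ univ.erase m₀, ‖α m‖ ^ 2) := by ring
    _ ≤ Fintype.card ι * ∑ m, c m * ‖α m‖ ^ 2 := by gcongr

end ZeroSum

/-- Let `N ≥ 2`. There is a constant `C > 0` depending only on `N` such that for
every `c : {0,…,N−1} → [0,∞)` and every unit vector `α ∈ ℂ^N` (Euclidean norm) with
`∑ α m = 0`, one has `∑ m, c m |α m|² ≥ C · max_{m₀} min_{m ≠ m₀} c m`. -/
theorem stmt_3 (N : ℕ) (hN : 2 ≤ N) :
    ∃ C : ℝ, 0 < C ∧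
      ∀ c : Fin N → ℝ, (∀ m, 0 ≤ c m) →
        ∀ α : EuclideanSpace ℂ (Fin N), ‖α‖ = 1 → (∑ m, α m = 0) →
          C * ((Finset.univ : Finset (Fin N)).sup'
                ⟨⟨0, by omega⟩, Finset.mem_univ _⟩
                (fun m₀ => (Finset.univ.erase m₀).inf'
                  (Finset.card_pos.mp (by
                    rw [Finset.card_erase_of_mem (Finset.mem_univ _), Finset.card_univ,
                      Fintype.card_fin]
                    omega)) c))
            ≤ ∑ m, c m * ‖α m‖ ^ 2 := by
  have hNpos : (0 : ℝ) < N := by positivity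
  refine ⟨(N : ℝ)⁻¹, by positivity, fun c hc α hα hsum => ?_⟩
  have hunit : ∑ m, ‖α m‖ ^ 2 = 1 := by rw [← EuclideanSpace.norm_sq_eq, hα, one_pow]
  rw [inv_mul_le_iff₀ hNpos]
  refine sup'_le _ _ fun m₀ _ => ?_
  have key := fun hne => inf'_erase_mul_sum_sq_norm_le_of_sum_eq_zero hc hsum m₀ hne
  simp only [hunit, mul_one, Fintype.card_fin] at key
  exact key _
end

section
/- Let α > 0 be a real number and j ∈ ℤ. Define φ̂ : ℝ → ℂ by φ̂(ω) = (1 − e^{2^j(α − iω)}) / (iω − α). Then there exist constants 0 < A ≤ B < ∞ such that for every ω ∈ ℝ, A ≤ ∑_{k∈ℤ} |φ̂(ω − 2π·2^{−j} k)|² ≤ B. -/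
open Real

/-!
Since `Re (2^j (α - iω)) = 2^j α > 0`, the numerator `|1 - e^{2^j(α - iω)}|` stays between
`e^{2^j α} - 1 > 0` and `e^{2^j α} + 1`, while `|iω - α|² = ω² + α²`. So the sum is comparable,
from both sides, to the periodization `∑ₖ ((ω - ck)² + α²)⁻¹` with `c = 2π·2^{-j}`. That sum is
at least its term at the lattice point `ck₀` nearest to `ω`, hence at least `(c²/4 + α²)⁻¹`; and
as `|ω - c(k₀ + m)| ≥ c|m|/2`, it is at most `∑ₘ (c²m²/4 + α²)⁻¹ < ∞`.
-/

lemma sq_exp_re_sub_one_le_sq_norm_one_sub_exp (z : ℂ) :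
    (rexp z.re - 1) ^ 2 ≤ ‖1 - Complex.exp z‖ ^ 2 := by
  have h := abs_norm_sub_norm_le (Complex.exp z) 1
  rw [Complex.norm_exp, norm_one, norm_sub_rev] at h
  rw [← sq_abs]
  gcongr

lemma sq_norm_one_sub_exp_le (z : ℂ) : ‖1 - Complex.exp z‖ ^ 2 ≤ (1 + rexp z.re) ^ 2 := by
  have h := norm_sub_le (1 : ℂ) (Complex.exp z)
  rw [Complex.norm_exp, norm_one] at h
  gcongr

lemma sq_norm_one_sub_exp_div_mem_Icc (z w : ℂ) :
    ‖(1 - Complex.exp z) / w‖ ^ 2 ∈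
      Set.Icc ((rexp z.re - 1) ^ 2 * (‖w‖ ^ 2)⁻¹) ((1 + rexp z.re) ^ 2 * (‖w‖ ^ 2)⁻¹) := by
  rw [norm_div, div_pow, div_eq_mul_inv]
  exact ⟨mul_le_mul_of_nonneg_right (sq_exp_re_sub_one_le_sq_norm_one_sub_exp z) (by positivity),
    mul_le_mul_of_nonneg_right (sq_norm_one_sub_exp_le z) (by positivity)⟩

lemma sq_norm_expBSpline_symbol_mem_Icc (α ω : ℝ) (j : ℤ) :
    ‖(1 - Complex.exp ((2 : ℂ) ^ j * ((α : ℂ) - Complex.I * (ω : ℂ)))) /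
        (Complex.I * (ω : ℂ) - (α : ℂ))‖ ^ 2 ∈
      Set.Icc ((rexp (2 ^ j * α) - 1) ^ 2 * (ω ^ 2 + α ^ 2)⁻¹)
        ((1 + rexp (2 ^ j * α)) ^ 2 * (ω ^ 2 + α ^ 2)⁻¹) := by
  have hre : ((2 : ℂ) ^ j * ((α : ℂ) - Complex.I * (ω : ℂ))).re = 2 ^ j * α := by
    rw [← Complex.ofReal_ofNat, ← Complex.ofReal_zpow, Complex.re_ofReal_mul]
    simp
  have hnorm : ‖Complex.I * (ω : ℂ) - (α : ℂ)‖ ^ 2 = ω ^ 2 + α ^ 2 := by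
    rw [Complex.sq_norm, sub_eq_neg_add, mul_comm, ← Complex.ofReal_neg, Complex.normSq_add_mul_I,
      neg_sq, add_comm]
  rw [← hre, ← hnorm]
  exact sq_norm_one_sub_exp_div_mem_Icc _ _

lemma tsum_bounds_of_mem_Icc_mul {ι : Type*} {f P : ι → ℝ} {a b : ℝ} (hP : Summable P)
    (hf₀ : ∀ i, 0 ≤ f i) (hf : ∀ i, f i ∈ Set.Icc (a * P i) (b * P i)) :
    a * ∑' i, P i ≤ ∑' i, f i ∧ ∑' i, f i ≤ b * ∑' i, P i := by
  have hfP : Summable f := .of_nonneg_of_le hf₀ (fun i => (hf i).2) (hP.mul_left b)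
  rw [← tsum_mul_left, ← tsum_mul_left]
  exact ⟨(hP.mul_left a).tsum_le_tsum (fun i => (hf i).1) hfP,
    hfP.tsum_le_tsum (fun i => (hf i).2) (hP.mul_left b)⟩

section Periodization

variable {a c : ℝ}

lemma exists_abs_sub_mul_int_le (hc : 0 < c) (ω : ℝ) : ∃ k : ℤ, |ω - c * k| ≤ c / 2 := by
  refine ⟨round (ω / c), ?_⟩
  have h := abs_sub_round (ω / c)
  have hω : ω - c * round (ω / c) = c * (ω / c - round (ω / c)) := by field_simp
  rw [hω, abs_mul, abs_of_pos hc]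
  linarith [mul_le_mul_of_nonneg_left h hc.le]

lemma sq_mul_int_div_four_le_sq_sub {x : ℝ} (hx : |x| ≤ c / 2) (m : ℤ) :
    c ^ 2 / 4 * m ^ 2 ≤ (x - c * m) ^ 2 := by
  have hc : 0 ≤ c := by linarith [abs_nonneg x]
  rcases eq_or_ne m 0 with rfl | hm
  · simp [sq_nonneg]
  have hm : (1 : ℝ) ≤ |(m : ℝ)| := by exact_mod_cast Int.one_le_abs hm
  have h : c * |(m : ℝ)| / 2 ≤ |x - c * m| := by
    have := abs_sub_abs_le_abs_sub (c * m) x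
    rw [abs_mul, abs_of_nonneg hc, abs_sub_comm] at this
    nlinarith
  calc c ^ 2 / 4 * m ^ 2 = (c * |(m : ℝ)| / 2) ^ 2 := by rw [div_pow, mul_pow, sq_abs]; ring
    _ ≤ |x - c * m| ^ 2 := by gcongr
    _ = (x - c * m) ^ 2 := sq_abs _

lemma summable_inv_mul_int_sq_add_sq (hc : 0 < c) (a : ℝ) :
    Summable fun m : ℤ => (c ^ 2 / 4 * m ^ 2 + a ^ 2)⁻¹ := by
  refine .of_norm_bounded_eventually
    ((summable_one_div_int_pow.2 one_lt_two).mul_left (c ^ 2 / 4)⁻¹) ?_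
  refine (Filter.eventually_cofinite_ne 0).mono fun m hm => ?_
  have hm : (m : ℝ) ≠ 0 := Int.cast_ne_zero.2 hm
  rw [Real.norm_of_nonneg (by positivity), one_div, ← mul_inv]
  exact inv_anti₀ (by positivity) (le_add_of_nonneg_right (sq_nonneg a))

lemma inv_sq_sub_mul_int_add_sq_le {x : ℝ} (hx : |x| ≤ c / 2) (ha : a ≠ 0) (m : ℤ) :
    ((x - c * m) ^ 2 + a ^ 2)⁻¹ ≤ (c ^ 2 / 4 * m ^ 2 + a ^ 2)⁻¹ := by
  have hc : 0 ≤ c := by linarith [abs_nonneg x]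
  exact inv_anti₀ (by positivity) (by gcongr; exact sq_mul_int_div_four_le_sq_sub hx m)

variable (hc : 0 < c) (ha : a ≠ 0) (ω : ℝ)
include hc ha

lemma summable_inv_sq_sub_mul_int_add_sq :
    Summable fun k : ℤ => ((ω - c * k) ^ 2 + a ^ 2)⁻¹ := by
  obtain ⟨k₀, hk₀⟩ := exists_abs_sub_mul_int_le hc ω
  refine (Equiv.addLeft k₀).summable_iff.1 <| .of_nonneg_of_le
    (fun _ => inv_nonneg.2 (by positivity)) (fun m => ?_) (summable_inv_mul_int_sq_add_sq hc a)
  simpa [mul_add, sub_add_eq_sub_sub] using inv_sq_sub_mul_int_add_sq_le hk₀ ha m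

lemma inv_le_tsum_inv_sq_sub_mul_int_add_sq :
    (c ^ 2 / 4 + a ^ 2)⁻¹ ≤ ∑' k : ℤ, ((ω - c * k) ^ 2 + a ^ 2)⁻¹ := by
  obtain ⟨k₀, hk₀⟩ := exists_abs_sub_mul_int_le hc ω
  have hnear : (c ^ 2 / 4 + a ^ 2)⁻¹ ≤ ((ω - c * k₀) ^ 2 + a ^ 2)⁻¹ := by
    refine inv_anti₀ (by positivity) ?_
    have := sq_le_sq' (abs_le.1 hk₀).1 (abs_le.1 hk₀).2
    linarith
  exact hnear.trans ((summable_inv_sq_sub_mul_int_add_sq hc ha ω).le_tsum k₀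
    fun _ _ => inv_nonneg.2 (by positivity))

lemma tsum_inv_sq_sub_mul_int_add_sq_le :
    ∑' k : ℤ, ((ω - c * k) ^ 2 + a ^ 2)⁻¹ ≤ ∑' m : ℤ, (c ^ 2 / 4 * m ^ 2 + a ^ 2)⁻¹ := by
  obtain ⟨k₀, hk₀⟩ := exists_abs_sub_mul_int_le hc ω
  rw [← (Equiv.addLeft k₀).tsum_eq]
  have hshift := (Equiv.addLeft k₀).summable_iff.2 (summable_inv_sq_sub_mul_int_add_sq hc ha ω)
  refine hshift.tsum_le_tsum (fun m => ?_) (summable_inv_mul_int_sq_add_sq hc a)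
  simpa [mul_add, sub_add_eq_sub_sub] using inv_sq_sub_mul_int_add_sq_le hk₀ ha m

end Periodization

/-- Let `α > 0` and `j ∈ ℤ`, and let
`φ̂(ω) = (1 − exp(2^j(α − iω)))/(iω − α)` be the Fourier transform of the exponential
B-spline. Then there are constants `0 < A ≤ B < ∞` such that for every `ω ∈ ℝ`,
`A ≤ ∑_{k∈ℤ} |φ̂(ω − 2π·2^{−j}k)|² ≤ B`. -/
theorem stmt_7 (α : ℝ) (hα : 0 < α) (j : ℤ)
    (φhat : ℝ → ℂ)
    (hφ : ∀ ω : ℝ, φhat ω =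
      (1 - Complex.exp ((2 : ℂ) ^ j * ((α : ℂ) - Complex.I * (ω : ℂ)))) /
        (Complex.I * (ω : ℂ) - (α : ℂ))) :
    ∃ A B : ℝ, 0 < A ∧ A ≤ B ∧
      ∀ ω : ℝ,
        A ≤ ∑' k : ℤ, ‖φhat (ω - 2 * π * (2 : ℝ) ^ (-j) * (k : ℝ))‖ ^ 2 ∧
        ∑' k : ℤ, ‖φhat (ω - 2 * π * (2 : ℝ) ^ (-j) * (k : ℝ))‖ ^ 2 ≤ B := by
  set c := 2 * π * (2 : ℝ) ^ (-j)
  have hc : 0 < c := by positivity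
  set E := rexp (2 ^ j * α)
  have hE : 1 < E := one_lt_exp_iff.2 (by positivity)
  have bounds : ∀ ω : ℝ,
      (E - 1) ^ 2 * (c ^ 2 / 4 + α ^ 2)⁻¹ ≤ ∑' k : ℤ, ‖φhat (ω - c * k)‖ ^ 2 ∧
      ∑' k : ℤ, ‖φhat (ω - c * k)‖ ^ 2 ≤ (1 + E) ^ 2 * ∑' m : ℤ, (c ^ 2 / 4 * m ^ 2 + α ^ 2)⁻¹ := by
    intro ω
    obtain ⟨hlow, hup⟩ := tsum_bounds_of_mem_Icc_mul
      (summable_inv_sq_sub_mul_int_add_sq hc hα.ne' ω) (fun _ => by positivity)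
      fun k => hφ _ ▸ sq_norm_expBSpline_symbol_mem_Icc α (ω - c * k) j
    exact ⟨(mul_le_mul_of_nonneg_left (inv_le_tsum_inv_sq_sub_mul_int_add_sq hc hα.ne' ω)
        (sq_nonneg _)).trans hlow,
      hup.trans (mul_le_mul_of_nonneg_left (tsum_inv_sq_sub_mul_int_add_sq_le hc hα.ne' ω)
        (sq_nonneg _))⟩
  exact ⟨_, _, mul_pos (pow_pos (sub_pos.2 hE) 2) (by positivity),
    (bounds 0).1.trans (bounds 0).2, bounds⟩
end

section
/- Let d ≥ 1 be an integer and ν > d/2 a real number. Then there exist constants 0 < A ≤ B < ∞ such that for every ω ∈ ℝ^d, A ≤ ∑_{k∈ℤ^d} (1 + ‖ω + 2πk‖²)^{−ν} ≤ B. -/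
open Real

/-!
Pick m ∈ ℤ^d with ω + 2πm ∈ [-π, π]^d, so that ‖ω + 2πm‖² ≤ dπ²; the m-th term alone gives the
lower bound (1 + dπ²)^{-ν}. The sum is invariant under ω ↦ ω + 2πm, and for ω in the cube
Peetre's inequality 1 + ‖y‖² ≤ 2(1 + ‖x‖²)(1 + ‖x + y‖²) dominates it by
(2(1 + dπ²))^ν ∑_k (1 + ‖k‖²)^{-ν}, which converges because ‖z‖^{-2ν} is summable over any
lattice of rank less than 2ν.
-/

section Peetre

variable {E : Type*} [SeminormedAddCommGroup E]

lemma one_add_norm_sq_le_two_mul (x y : E) :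
    1 + ‖y‖ ^ 2 ≤ 2 * (1 + ‖x‖ ^ 2) * (1 + ‖x + y‖ ^ 2) := by
  have hy : ‖y‖ ≤ ‖x + y‖ + ‖x‖ := by
    simpa using norm_sub_le (x + y) x
  nlinarith [norm_nonneg y, sq_nonneg (‖x + y‖ - ‖x‖),
    mul_nonneg (sq_nonneg ‖x‖) (sq_nonneg ‖x + y‖)]

lemma one_add_norm_sq_add_rpow_neg_le {ν : ℝ} (hν : 0 ≤ ν) (x y : E) :
    (1 + ‖x + y‖ ^ 2) ^ (-ν) ≤ (2 * (1 + ‖x‖ ^ 2)) ^ ν * (1 + ‖y‖ ^ 2) ^ (-ν) := by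
  have hc : 0 < 2 * (1 + ‖x‖ ^ 2) := by positivity
  calc (1 + ‖x + y‖ ^ 2) ^ (-ν)
      ≤ ((1 + ‖y‖ ^ 2) / (2 * (1 + ‖x‖ ^ 2))) ^ (-ν) :=
        rpow_le_rpow_of_nonpos (by positivity)
          ((div_le_iff₀' hc).2 (one_add_norm_sq_le_two_mul x y)) (neg_nonpos.2 hν)
    _ = (2 * (1 + ‖x‖ ^ 2)) ^ ν * (1 + ‖y‖ ^ 2) ^ (-ν) := by
        rw [div_rpow (by positivity) hc.le, rpow_neg hc.le, div_inv_eq_mul, mul_comm]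

end Peetre

section Lattice

variable {E : Type*} [NormedAddCommGroup E] [NormedSpace ℝ E] [FiniteDimensional ℝ E]

lemma ZLattice.summable_one_add_norm_sq_rpow_neg (L : Submodule ℤ E) [DiscreteTopology L]
    {ν : ℝ} (hν : (Module.finrank ℤ L : ℝ) < 2 * ν) :
    Summable fun z : L ↦ (1 + ‖z‖ ^ 2) ^ (-ν) := by
  refine (ZLattice.summable_norm_rpow L (-(2 * ν)) (by linarith)).of_norm_bounded_eventually ?_
  filter_upwards [(Set.finite_singleton (0 : L)).compl_mem_cofinite] with z hz
  have hz : 0 < ‖z‖ := norm_pos_iff.2 hz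
  have hν : 0 ≤ ν := by linarith [(Module.finrank ℤ L).cast_nonneg (α := ℝ)]
  rw [norm_of_nonneg (by positivity), show -(2 * ν) = (2 : ℕ) * -ν by push_cast; ring,
    rpow_natCast_mul hz.le]
  exact rpow_le_rpow_of_nonpos (by positivity) (le_add_of_nonneg_left zero_le_one)
    (neg_nonpos.2 hν)

lemma Module.Basis.summable_one_add_norm_sq_rpow_neg {ι : Type*} [Fintype ι] (b : Basis ι ℝ E)
    {ν : ℝ} (hν : (Fintype.card ι : ℝ) < 2 * ν) :
    Summable fun k : ι → ℤ ↦ (1 + ‖∑ i, k i • b i‖ ^ 2) ^ (-ν) := by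
  let bℤ := b.restrictScalars ℤ
  have h := ZLattice.summable_one_add_norm_sq_rpow_neg (Submodule.span ℤ (Set.range b))
    (ν := ν) (by rwa [Module.finrank_eq_card_basis bℤ])
  refine (bℤ.equivFun.symm.toEquiv.summable_iff.2 h).congr fun k ↦ ?_
  simp [bℤ, Module.Basis.equivFun_symm_apply]

end Lattice

section Periodization

variable {ι : Type*}

noncomputable def latticePoint (k : ι → ℤ) : EuclideanSpace ℝ ι :=
  WithLp.toLp 2 fun i ↦ (k i : ℝ)

@[simp]
lemma latticePoint_apply (k : ι → ℤ) (i : ι) : latticePoint k i = k i := rfl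

lemma latticePoint_add (k m : ι → ℤ) : latticePoint (k + m) = latticePoint k + latticePoint m := by
  ext i; simp

variable [Fintype ι]

lemma sum_zsmul_basisFun [DecidableEq ι] (k : ι → ℤ) :
    ∑ i, k i • EuclideanSpace.basisFun ι ℝ i = latticePoint k := by
  ext j; simp [Finset.sum_apply, Pi.single_apply]

lemma summable_one_add_norm_sq_latticePoint_rpow_neg {ν : ℝ} (hν : (Fintype.card ι : ℝ) < 2 * ν) :
    Summable fun k : ι → ℤ ↦ (1 + ‖latticePoint k‖ ^ 2) ^ (-ν) := by
  classical
  simpa only [OrthonormalBasis.coe_toBasis, sum_zsmul_basisFun] using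
    (EuclideanSpace.basisFun ι ℝ).toBasis.summable_one_add_norm_sq_rpow_neg hν

lemma exists_norm_sq_add_two_pi_smul_latticePoint_le (ω : EuclideanSpace ℝ ι) :
    ∃ m : ι → ℤ, ‖ω + (2 * π) • latticePoint m‖ ^ 2 ≤ Fintype.card ι * π ^ 2 := by
  refine ⟨fun i ↦ -round (ω i / (2 * π)), ?_⟩
  rw [EuclideanSpace.norm_sq_eq, ← nsmul_eq_mul, ← Finset.card_univ, ← Finset.sum_const]
  refine Finset.sum_le_sum fun i _ ↦ ?_
  set t := ω i / (2 * π)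
  have hbox : |ω i + 2 * π * ((-round t : ℤ) : ℝ)| ≤ π := by
    have ht : ω i + 2 * π * ((-round t : ℤ) : ℝ) = 2 * π * (t - round t) := by
      simp only [t]; push_cast; field_simp; ring
    rw [ht, abs_mul, abs_of_pos two_pi_pos]
    nlinarith [abs_sub_round t, pi_pos]
  simpa only [PiLp.add_apply, PiLp.smul_apply, latticePoint_apply, smul_eq_mul, norm_eq_abs,
    sq_abs] using pow_le_pow_left₀ (abs_nonneg _) hbox 2

lemma one_add_norm_sq_add_two_pi_smul_rpow_neg_le {ν : ℝ} (hν : 0 ≤ ν)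
    (ω : EuclideanSpace ℝ ι) (k : ι → ℤ) :
    (1 + ‖ω + (2 * π) • latticePoint k‖ ^ 2) ^ (-ν) ≤
      (2 * (1 + ‖ω‖ ^ 2)) ^ ν * (1 + ‖latticePoint k‖ ^ 2) ^ (-ν) := by
  have hk : ‖latticePoint k‖ ≤ ‖(2 * π) • latticePoint k‖ := by
    rw [norm_smul, norm_of_nonneg two_pi_pos.le]
    nlinarith [norm_nonneg (latticePoint k), pi_gt_three]
  refine (one_add_norm_sq_add_rpow_neg_le hν _ _).trans
    (mul_le_mul_of_nonneg_left ?_ (by positivity))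
  exact rpow_le_rpow_of_nonpos (by positivity) (by gcongr) (neg_nonpos.2 hν)

lemma summable_one_add_norm_sq_add_two_pi_smul_rpow_neg {ν : ℝ}
    (hν : (Fintype.card ι : ℝ) < 2 * ν) (ω : EuclideanSpace ℝ ι) :
    Summable fun k : ι → ℤ ↦ (1 + ‖ω + (2 * π) • latticePoint k‖ ^ 2) ^ (-ν) := by
  have hν₀ : 0 ≤ ν := by linarith [(Fintype.card ι).cast_nonneg (α := ℝ)]
  exact ((summable_one_add_norm_sq_latticePoint_rpow_neg hν).mul_left _).of_nonneg_of_le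
    (fun _ ↦ by positivity) (one_add_norm_sq_add_two_pi_smul_rpow_neg_le hν₀ ω)

noncomputable def maternRieszSum (ν : ℝ) (ω : EuclideanSpace ℝ ι) : ℝ :=
  ∑' k : ι → ℤ, (1 + ‖ω + (2 * π) • latticePoint k‖ ^ 2) ^ (-ν)

lemma maternRieszSum_add_two_pi_smul_latticePoint (ν : ℝ) (ω : EuclideanSpace ℝ ι)
    (m : ι → ℤ) : maternRieszSum ν (ω + (2 * π) • latticePoint m) = maternRieszSum ν ω := by
  rw [maternRieszSum, maternRieszSum,
    ← (Equiv.addLeft m).tsum_eq fun k ↦ (1 + ‖ω + (2 * π) • latticePoint k‖ ^ 2) ^ (-ν)]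
  simp only [Equiv.coe_addLeft, latticePoint_add, smul_add, add_assoc]

lemma rpow_neg_le_maternRieszSum {ν : ℝ} (hν : (Fintype.card ι : ℝ) < 2 * ν)
    (ω : EuclideanSpace ℝ ι) : (1 + Fintype.card ι * π ^ 2) ^ (-ν) ≤ maternRieszSum ν ω := by
  have hν₀ : 0 ≤ ν := by linarith [(Fintype.card ι).cast_nonneg (α := ℝ)]
  obtain ⟨m, hm⟩ := exists_norm_sq_add_two_pi_smul_latticePoint_le ω
  calc (1 + Fintype.card ι * π ^ 2) ^ (-ν)
      ≤ (1 + ‖ω + (2 * π) • latticePoint m‖ ^ 2) ^ (-ν) :=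
        rpow_le_rpow_of_nonpos (by positivity) (by linarith) (neg_nonpos.2 hν₀)
    _ ≤ maternRieszSum ν ω :=
        (summable_one_add_norm_sq_add_two_pi_smul_rpow_neg hν ω).le_tsum m
          fun _ _ ↦ by positivity

lemma maternRieszSum_le {ν : ℝ} (hν : (Fintype.card ι : ℝ) < 2 * ν) (ω : EuclideanSpace ℝ ι) :
    maternRieszSum ν ω ≤ (2 * (1 + Fintype.card ι * π ^ 2)) ^ ν *
      ∑' k : ι → ℤ, (1 + ‖latticePoint k‖ ^ 2) ^ (-ν) := by
  have hν₀ : 0 ≤ ν := by linarith [(Fintype.card ι).cast_nonneg (α := ℝ)]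
  obtain ⟨m, hm⟩ := exists_norm_sq_add_two_pi_smul_latticePoint_le ω
  set ω' := ω + (2 * π) • latticePoint m
  rw [← maternRieszSum_add_two_pi_smul_latticePoint ν ω m, maternRieszSum, ← tsum_mul_left]
  refine (summable_one_add_norm_sq_add_two_pi_smul_rpow_neg hν ω').tsum_le_tsum (fun k ↦ ?_)
    ((summable_one_add_norm_sq_latticePoint_rpow_neg hν).mul_left _)
  refine (one_add_norm_sq_add_two_pi_smul_rpow_neg_le hν₀ ω' k).trans ?_
  gcongr

end Periodization

theorem stmt_8_general (d : ℕ) (ν : ℝ) (hν : (d : ℝ) / 2 < ν) :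
    ∃ A B : ℝ, 0 < A ∧ A ≤ B ∧
      ∀ ω : EuclideanSpace ℝ (Fin d),
        A ≤ (∑' k : Fin d → ℤ,
              (1 + ‖ω + (2 * π) •
                  (WithLp.equiv 2 (Fin d → ℝ)).symm (fun i => (k i : ℝ))‖ ^ 2) ^ (-ν)) ∧
        (∑' k : Fin d → ℤ,
              (1 + ‖ω + (2 * π) •
                  (WithLp.equiv 2 (Fin d → ℝ)).symm (fun i => (k i : ℝ))‖ ^ 2) ^ (-ν)) ≤ B := by
  have hν' : (Fintype.card (Fin d) : ℝ) < 2 * ν := by rw [Fintype.card_fin]; linarith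
  exact ⟨_, _, by positivity,
    (rpow_neg_le_maternRieszSum hν' 0).trans (maternRieszSum_le hν' 0),
    fun ω ↦ ⟨rpow_neg_le_maternRieszSum hν' ω, maternRieszSum_le hν' ω⟩⟩

/-- Let `d ≥ 1` and `ν > d/2`. Then there are constants `0 < A ≤ B < ∞` such
that for every `ω ∈ ℝ^d`, `A ≤ ∑_{k∈ℤ^d} (1 + ‖ω + 2πk‖²)^{−ν} ≤ B` (Euclidean norm);
this is the Riesz basis condition for the Matérn symbol `(1 + ‖ω‖²)^{ν/2}`. -/
theorem stmt_8 (d : ℕ) (hd : 1 ≤ d) (ν : ℝ) (hν : (d : ℝ) / 2 < ν) :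
    ∃ A B : ℝ, 0 < A ∧ A ≤ B ∧
      ∀ ω : EuclideanSpace ℝ (Fin d),
        A ≤ (∑' k : Fin d → ℤ,
              (1 + ‖ω + (2 * π) •
                  (WithLp.equiv 2 (Fin d → ℝ)).symm (fun i => (k i : ℝ))‖ ^ 2) ^ (-ν)) ∧
        (∑' k : Fin d → ℤ,
              (1 + ‖ω + (2 * π) •
                  (WithLp.equiv 2 (Fin d → ℝ)).symm (fun i => (k i : ℝ))‖ ^ 2) ^ (-ν)) ≤ B :=
  stmt_8_general d ν hν
end

section
/- Let d ≥ 1, let D be an invertible d×d integer matrix, let B be an invertible real d×d matrix, let p : ℤ^d → ℂ be absolutely summable, and let Φ : ℝ^d → ℂ be Lebesgue integrable such that for almost every ω ∈ ℝ^d the periodization ∑_{n∈ℤ^d} Φ(ω + 2π(B^T)^{−1}n) converges absolutely to a constant c independent of ω. Then for every k ∈ ℤ^d with k ∉ Dℤ^d, ∫_{ℝ^d} (∑_{n∈ℤ^d} p(n) e^{i ω·(BDn)}) e^{i ω·(Bk)} Φ(ω) dω = 0. -/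
/-!
Expanding the absolutely convergent trigonometric series reduces the claim to
`∫ e^{iω·Bm} Φ(ω) dω = 0` for every nonzero `m = Dn + k ∈ ℤ^d`. The character `e^{iω·Bm}` is
periodic with respect to the dual lattice `Λ = 2π(Bᵀ)⁻¹ℤ^d`, so folding the integral onto a
fundamental domain `F` of `Λ` gives `∫_F e^{iω·Bm} ∑_{λ∈Λ} Φ(ω + λ) dω = c ∫_F e^{iω·Bm} dω`.
This vanishes: translating `F` by a vector `u` with `u·Bm = π` gives another fundamental domain
and flips the sign of the character.
-/

open Matrix Real MeasureTheory Pointwise Submodule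

namespace MeasureTheory.IsAddFundamentalDomain

section

variable {G α : Type*} [AddGroup G] [Countable G] [AddAction G α] [MeasurableSpace α]
  [MeasurableConstVAdd G α] {μ : Measure α} [VAddInvariantMeasure G α μ] {F : Set α}

theorem integral_mul_eq_mul_setIntegral_of_tsum_vadd_eq (hF : IsAddFundamentalDomain G F μ)
    {g Φ : α → ℂ} (hg : ∀ (v : G) x, g (v +ᵥ x) = g x)
    (hgΦ : Integrable (fun x => g x * Φ x) μ) {c : ℂ} (hΦ : ∀ᵐ x ∂μ, ∑' v : G, Φ (v +ᵥ x) = c) :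
    ∫ x, g x * Φ x ∂μ = c * ∫ x in F, g x ∂μ := by
  have hfold : ∀ (v : G) x, g x * Φ (v +ᵥ x) = g (v +ᵥ x) * Φ (v +ᵥ x) :=
    fun v x => by rw [hg]
  calc ∫ x, g x * Φ x ∂μ = ∑' v : G, ∫ x in F, g x * Φ (v +ᵥ x) ∂μ := by
        simp only [hfold]; exact hF.integral_eq_tsum'' _ hgΦ
    _ = ∫ x in F, ∑' v : G, g x * Φ (v +ᵥ x) ∂μ := by
        refine (integral_tsum (fun v => ?_) ?_).symm
        · simp only [hfold]
          exact (hgΦ.aestronglyMeasurable.comp_measurePreserving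
            (measurePreserving_vadd v μ)).restrict
        · simp only [hfold]
          rw [← hF.lintegral_eq_tsum'' fun x => ‖g x * Φ x‖ₑ]
          exact hgΦ.2.ne
    _ = ∫ x in F, c * g x ∂μ := by
        refine integral_congr_ae ?_
        filter_upwards [ae_restrict_of_ae hΦ] with x hx
        rw [tsum_mul_left, hx, mul_comm]
    _ = c * ∫ x in F, g x ∂μ := integral_const_mul c g

end

theorem setIntegral_eq_zero_of_antiperiodic
    {E V : Type*} [AddCommGroup E] [MeasurableSpace E] [MeasurableAdd E] {μ : Measure E}
    [μ.IsAddLeftInvariant] [NormedAddCommGroup V] [NormedSpace ℝ V]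
    {Λ : AddSubgroup E} [Countable Λ] {F : Set E} (hF : IsAddFundamentalDomain Λ F μ) {g : E → V}
    (hg : ∀ (v : Λ) x, g (v +ᵥ x) = g x) {u : E} (hu : Function.Antiperiodic g u) :
    ∫ x in F, g x ∂μ = 0 := by
  have hshift : ∫ x in F, g x ∂μ = ∫ x in u +ᵥ F, g x ∂μ :=
    hF.setIntegral_eq (hF.vadd_of_comm u) hg
  rw [← Set.image_vadd, (measurePreserving_vadd u μ).setIntegral_image_emb
    (measurableEmbedding_const_vadd u)] at hshift
  simp only [vadd_eq_add, add_comm u, show ∀ x, g (x + u) = -g x from hu, integral_neg] at hshift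
  have := IsAddTorsionFree.of_isTorsionFree ℝ V
  exact self_eq_neg.mp hshift

end MeasureTheory.IsAddFundamentalDomain

theorem integral_tsum_mul_mul_eq_tsum_mul_integral {α β : Type*} [MeasurableSpace α]
    {μ : Measure α} [Countable β] {p : β → ℂ} (hp : Summable fun n => ‖p n‖) {e : β → α → ℂ}
    (he : ∀ n, AEStronglyMeasurable (e n) μ) (he_le : ∀ n x, ‖e n x‖ ≤ 1) {Φ : α → ℂ}
    (hΦ : Integrable Φ μ) :
    ∫ x, (∑' n, p n * e n x) * Φ x ∂μ = ∑' n, p n * ∫ x, e n x * Φ x ∂μ := by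
  have hle : ∀ n, ∫⁻ x, ‖p n * (e n x * Φ x)‖ₑ ∂μ ≤ ‖p n‖ₑ * ∫⁻ x, ‖Φ x‖ₑ ∂μ := fun n => by
    rw [← lintegral_const_mul' _ _ enorm_ne_top]
    refine lintegral_mono fun x => ?_
    rw [enorm_mul, enorm_mul]
    gcongr
    rw [← ofReal_norm]
    exact mul_le_of_le_one_left' (ENNReal.ofReal_le_one.mpr (he_le n x))
  have hfin : ∑' n, ∫⁻ x, ‖p n * (e n x * Φ x)‖ₑ ∂μ ≠ ⊤ := by
    refine ne_top_of_le_ne_top ?_ (ENNReal.tsum_le_tsum hle)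
    rw [ENNReal.tsum_mul_right]
    exact ENNReal.mul_ne_top (tsum_enorm_ne_top_iff_summable_norm.mpr hp) hΦ.2.ne
  simp_rw [← tsum_mul_right, mul_assoc]
  rw [integral_tsum (f := fun n x => p n * (e n x * Φ x))
    (fun n => ((he n).mul hΦ.1).const_mul (p n)) hfin]
  simp only [integral_const_mul]

namespace Matrix

variable {ι : Type*} [Fintype ι]

theorem transpose_inv_mulVec_dotProduct_mulVec {R : Type*} [CommRing R] {B : Matrix ι ι R}
    [DecidableEq ι] (hB : IsUnit B.det) (x y : ι → R) :
    ((Bᵀ)⁻¹ *ᵥ x) ⬝ᵥ (B *ᵥ y) = x ⬝ᵥ y := by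
  rw [dotProduct_mulVec, ← mulVec_transpose, mulVec_mulVec,
    mul_nonsing_inv _ (by rwa [det_transpose]), one_mulVec]

variable [DecidableEq ι]

noncomputable def colBasis (A : Matrix ι ι ℝ) (hA : IsUnit A.det) : Module.Basis ι ℝ (ι → ℝ) :=
  (Pi.basisFun ℝ ι).map (A.toLinearEquiv' (A.invertibleOfIsUnitDet hA))

theorem colBasis_apply (A : Matrix ι ι ℝ) (hA : IsUnit A.det) (i : ι) :
    A.colBasis hA i = A *ᵥ Pi.single i 1 := by
  rw [colBasis, Module.Basis.map_apply, Pi.basisFun_apply]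
  rfl

theorem coe_colBasis_restrictScalars_equivFun_symm (A : Matrix ι ι ℝ) (hA : IsUnit A.det)
    (n : ι → ℤ) :
    (((A.colBasis hA).restrictScalars ℤ).equivFun.symm n : ι → ℝ) = A *ᵥ fun i => (n i : ℝ) := by
  rw [Module.Basis.equivFun_symm_apply, Submodule.coe_sum]
  simp only [Submodule.coe_smul_of_tower, Module.Basis.restrictScalars_apply, colBasis_apply]
  simp only [← Int.cast_smul_eq_zsmul ℝ, ← Matrix.mulVec_smul, ← Matrix.mulVec_sum]
  congr 1
  ext j
  simp [Pi.single_apply]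

end Matrix

section expDot

variable {ι : Type*} [Fintype ι]

noncomputable def expDot (w ω : ι → ℝ) : ℂ :=
  Complex.exp (Complex.I * ((ω ⬝ᵥ w : ℝ) : ℂ))

theorem norm_expDot (w ω : ι → ℝ) : ‖expDot w ω‖ = 1 := by
  rw [expDot, mul_comm, Complex.norm_exp_ofReal_mul_I]

theorem continuous_expDot (w : ι → ℝ) : Continuous (expDot w) := by
  unfold expDot
  fun_prop

theorem expDot_add (w x y : ι → ℝ) : expDot w (x + y) = expDot w x * expDot w y := by
  simp only [expDot, add_dotProduct, Complex.ofReal_add, mul_add, Complex.exp_add]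

theorem expDot_add_left (v w ω : ι → ℝ) : expDot (v + w) ω = expDot v ω * expDot w ω := by
  simp only [expDot, dotProduct_add, Complex.ofReal_add, mul_add, Complex.exp_add]

theorem expDot_eq_one_of_dotProduct_eq {w u : ι → ℝ} {m : ℤ} (h : u ⬝ᵥ w = 2 * π * m) :
    expDot w u = 1 := by
  rw [expDot, h, ← Complex.exp_int_mul_two_pi_mul_I m]
  push_cast
  ring_nf

theorem expDot_eq_neg_one_of_dotProduct_eq {w u : ι → ℝ} (h : u ⬝ᵥ w = π) :
    expDot w u = -1 := by
  rw [expDot, h, mul_comm, Complex.exp_pi_mul_I]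

end expDot

section DualLattice

variable {ι : Type*} [Fintype ι] [DecidableEq ι] {B : Matrix ι ι ℝ}

theorem two_pi_smul_transpose_inv_mulVec_dotProduct_mulVec (hB : IsUnit B.det) (x y : ι → ℝ) :
    ((2 * π) • (Bᵀ)⁻¹ *ᵥ x) ⬝ᵥ (B *ᵥ y) = 2 * π * (x ⬝ᵥ y) := by
  rw [smul_dotProduct, transpose_inv_mulVec_dotProduct_mulVec hB, smul_eq_mul]

theorem periodic_expDot_mulVec (hB : IsUnit B.det) (m n : ι → ℤ) :
    Function.Periodic (expDot (B *ᵥ fun i => (m i : ℝ)))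
      ((2 * π) • (Bᵀ)⁻¹ *ᵥ fun i => (n i : ℝ)) := by
  have hdot : ((2 * π) • (Bᵀ)⁻¹ *ᵥ fun i => (n i : ℝ)) ⬝ᵥ (B *ᵥ fun i => (m i : ℝ)) =
      2 * π * (n ⬝ᵥ m : ℤ) := by
    rw [two_pi_smul_transpose_inv_mulVec_dotProduct_mulVec hB, ← eq_intCast (Int.castRingHom ℝ),
      RingHom.map_dotProduct]
    rfl
  intro x
  rw [expDot_add, expDot_eq_one_of_dotProduct_eq hdot, mul_one]

theorem antiperiodic_expDot_mulVec (hB : IsUnit B.det) {m : ι → ℤ} {j : ι} (hj : m j ≠ 0) :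
    Function.Antiperiodic (expDot (B *ᵥ fun i => (m i : ℝ)))
      ((2 * π) • (Bᵀ)⁻¹ *ᵥ (2 * (m j : ℝ))⁻¹ • Pi.single j 1) := by
  have hdot : ((2 * π) • (Bᵀ)⁻¹ *ᵥ (2 * (m j : ℝ))⁻¹ • Pi.single j 1) ⬝ᵥ
      (B *ᵥ fun i => (m i : ℝ)) = π := by
    have hmj : (m j : ℝ) ≠ 0 := by exact_mod_cast hj
    rw [two_pi_smul_transpose_inv_mulVec_dotProduct_mulVec hB, smul_dotProduct, single_dotProduct,
      smul_eq_mul, one_mul]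
    field_simp
  intro x
  rw [expDot_add, expDot_eq_neg_one_of_dotProduct_eq hdot, mul_neg_one]

theorem integral_expDot_mul_eq_zero (hB : IsUnit B.det) {Φ : (ι → ℝ) → ℂ} (hΦ : Integrable Φ)
    {c : ℂ}
    (hper : ∀ᵐ ω : ι → ℝ, ∑' n : ι → ℤ, Φ (ω + (2 * π) • (Bᵀ)⁻¹ *ᵥ fun i => (n i : ℝ)) = c)
    {m : ι → ℤ} (hm : m ≠ 0) :
    ∫ ω, expDot (B *ᵥ fun i => (m i : ℝ)) ω * Φ ω = 0 := by
  set A : Matrix ι ι ℝ := (2 * π) • (Bᵀ)⁻¹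
  have hA : IsUnit A.det := by
    rw [det_smul, det_nonsing_inv, det_transpose]
    exact (two_pi_pos.ne'.isUnit.pow _).mul hB.ringInverse
  set b := A.colBasis hA
  set Λ := (span ℤ (Set.range b)).toAddSubgroup
  let ψ : (ι → ℤ) ≃ Λ := (b.restrictScalars ℤ).equivFun.symm.toEquiv
  have hψ : ∀ n, (ψ n : ι → ℝ) = (2 * π) • (Bᵀ)⁻¹ *ᵥ fun i => (n i : ℝ) := fun n => by
    rw [← smul_mulVec]
    exact coe_colBasis_restrictScalars_equivFun_symm A hA n
  have : Countable Λ := inferInstanceAs (Countable (span ℤ (Set.range b)))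
  have hF : IsAddFundamentalDomain Λ (ZSpan.fundamentalDomain b) :=
    ZSpan.isAddFundamentalDomain' b volume
  have hperiodic : ∀ (v : Λ) x, expDot (B *ᵥ fun i => (m i : ℝ)) (v +ᵥ x) =
      expDot (B *ᵥ fun i => (m i : ℝ)) x := by
    intro v x
    obtain ⟨n, rfl⟩ := ψ.surjective v
    rw [AddSubgroup.vadd_def, vadd_eq_add, hψ, add_comm, periodic_expDot_mulVec hB m n]
  have hsum : ∀ᵐ x, ∑' v : Λ, Φ (v +ᵥ x) = c := by
    filter_upwards [hper] with x hx
    rw [← ψ.tsum_eq]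
    simpa only [AddSubgroup.vadd_def, vadd_eq_add, hψ, add_comm] using hx
  have hintegrable : Integrable (fun ω => expDot (B *ᵥ fun i => (m i : ℝ)) ω * Φ ω) :=
    hΦ.bdd_mul (continuous_expDot _).aestronglyMeasurable (.of_forall fun ω => (norm_expDot _ ω).le)
  obtain ⟨j, hj⟩ := Function.ne_iff.mp hm
  rw [hF.integral_mul_eq_mul_setIntegral_of_tsum_vadd_eq hperiodic hintegrable hsum,
    hF.setIntegral_eq_zero_of_antiperiodic hperiodic (antiperiodic_expDot_mulVec hB hj), mul_zero]

end DualLattice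

theorem stmt_13_general (d : ℕ)
    (D : Matrix (Fin d) (Fin d) ℤ)
    (B : Matrix (Fin d) (Fin d) ℝ) (hB : IsUnit B.det)
    (p : (Fin d → ℤ) → ℂ) (hp : Summable fun n => ‖p n‖)
    (Φ : (Fin d → ℝ) → ℂ) (hΦ : Integrable Φ)
    (c : ℂ)
    (hper : ∀ᵐ ω : Fin d → ℝ ∂volume,
      (Summable fun n : Fin d → ℤ =>
        ‖Φ (ω + (2 * π) • (B.transpose)⁻¹.mulVec (fun i => (n i : ℝ)))‖) ∧
      (∑' n : Fin d → ℤ,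
        Φ (ω + (2 * π) • (B.transpose)⁻¹.mulVec (fun i => (n i : ℝ)))) = c) :
    ∀ k : Fin d → ℤ, (¬ ∃ m : Fin d → ℤ, D.mulVec m = k) →
      (∫ ω : Fin d → ℝ,
        (∑' n : Fin d → ℤ,
          p n * Complex.exp (Complex.I *
            ((ω ⬝ᵥ B.mulVec (fun i => ((D.mulVec n) i : ℝ)) : ℝ) : ℂ))) *
        Complex.exp (Complex.I * ((ω ⬝ᵥ B.mulVec (fun i => (k i : ℝ)) : ℝ) : ℂ)) *
        Φ ω) = 0 := by
  intro k hk
  set freq : (Fin d → ℤ) → Fin d → ℝ := fun n => B *ᵥ fun i => ((D *ᵥ n + k) i : ℝ)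
  have hfreq : ∀ n ω, expDot (B *ᵥ fun i => ((D *ᵥ n) i : ℝ)) ω *
      expDot (B *ᵥ fun i => (k i : ℝ)) ω = expDot (freq n) ω := fun n ω => by
    simp only [freq, ← expDot_add_left, ← mulVec_add, Pi.add_apply, Int.cast_add]
    rfl
  have hne : ∀ n, D *ᵥ n + k ≠ 0 := fun n h =>
    hk ⟨-n, by rwa [mulVec_neg, neg_eq_iff_add_eq_zero]⟩
  -- The first line is the goal with its exponentials folded into `expDot`.
  calc ∫ ω, (∑' n, p n * expDot (B *ᵥ fun i => ((D *ᵥ n) i : ℝ)) ω) *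
          expDot (B *ᵥ fun i => (k i : ℝ)) ω * Φ ω
      = ∫ ω, (∑' n, p n * expDot (freq n) ω) * Φ ω := by
        congr with ω
        simp only [← tsum_mul_right, mul_assoc, hfreq]
    _ = ∑' n, p n * ∫ ω, expDot (freq n) ω * Φ ω :=
        integral_tsum_mul_mul_eq_tsum_mul_integral hp
          (fun n => (continuous_expDot _).aestronglyMeasurable) (fun n ω => (norm_expDot _ _).le) hΦ
    _ = 0 := by
        simp only [freq, integral_expDot_mul_eq_zero hB hΦ (hper.mono fun _ h => h.2) (hne _),
          mul_zero, tsum_zero]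

/-- Let `d ≥ 1`, `D` an invertible integer `d×d` matrix, `B` an invertible
real `d×d` matrix, `p : ℤ^d → ℂ` absolutely summable, and `Φ : ℝ^d → ℂ` integrable such
that for almost every `ω` the periodization `∑_{n∈ℤ^d} Φ(ω + 2π(Bᵀ)⁻¹n)` converges
absolutely to a constant `c` independent of `ω`. Then for every `k ∈ ℤ^d` with `k ∉ Dℤ^d`,
`∫ (∑_n p n e^{iω·(BDn)}) e^{iω·(Bk)} Φ(ω) dω = 0`. -/
theorem stmt_13 (d : ℕ) (hd : 1 ≤ d)
    (D : Matrix (Fin d) (Fin d) ℤ) (hD : D.det ≠ 0)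
    (B : Matrix (Fin d) (Fin d) ℝ) (hB : IsUnit B.det)
    (p : (Fin d → ℤ) → ℂ) (hp : Summable fun n => ‖p n‖)
    (Φ : (Fin d → ℝ) → ℂ) (hΦ : Integrable Φ)
    (c : ℂ)
    (hper : ∀ᵐ ω : Fin d → ℝ ∂volume,
      (Summable fun n : Fin d → ℤ =>
        ‖Φ (ω + (2 * π) • (B.transpose)⁻¹.mulVec (fun i => (n i : ℝ)))‖) ∧
      (∑' n : Fin d → ℤ,
        Φ (ω + (2 * π) • (B.transpose)⁻¹.mulVec (fun i => (n i : ℝ)))) = c) :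
    ∀ k : Fin d → ℤ, (¬ ∃ m : Fin d → ℤ, D.mulVec m = k) →
      (∫ ω : Fin d → ℝ,
        (∑' n : Fin d → ℤ,
          p n * Complex.exp (Complex.I *
            ((ω ⬝ᵥ B.mulVec (fun i => ((D.mulVec n) i : ℝ)) : ℝ) : ℂ))) *
        Complex.exp (Complex.I * ((ω ⬝ᵥ B.mulVec (fun i => (k i : ℝ)) : ℝ) : ℂ)) *
        Φ ω) = 0 :=
  stmt_13_general d D B hB p hp Φ hΦ c hper
end

section
/- Let d ≥ 1, let B be an invertible real d×d matrix, and let Ω ⊂ ℝ^d be a bounded measurable fundamental domain of the lattice 2π(B^T)^{−1}ℤ^d, i.e., ∑_{k∈ℤ^d} χ_Ω(x + 2π(B^T)^{−1}k) = 1 for every x ∈ ℝ^d. Let (g_n)_{n∈ℕ} be measurable functions ℝ^d → [0,1] such that for almost every ω the periodization G_n(ω) := ∑_{l∈ℤ^d} g_n(ω − 2π(B^T)^{−1}l) satisfies G_n(ω) ≤ 1 for all n, and G_n(ω) → 1 as n → ∞ for almost every ω. Then for every k ∈ ℤ^d with k ≠ 0, ∫_{ℝ^d} g_n(ω) e^{−i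 (Bk)·ω} dω → 0 as n → ∞. -/
/-!
Write Λ = 2π(Bᵀ)⁻¹ℤ^d and e(ω) = exp(−i (Bk)·ω). Since (Bk)·2π(Bᵀ)⁻¹l = 2π k·l, the character e is
Λ-periodic, so unfolding the integral over the fundamental domain Ω gives
∫ g_n e = ∫_Ω G_n e. For k ≠ 0 the character is also antiperiodic under a translation t with
(Bk)·t = π; as Ω - t is again a fundamental domain, ∫_Ω e = -∫_Ω e = 0. Hence
|∫ g_n e| = |∫_Ω (G_n - 1) e| ≤ ∫_Ω (1 - G_n), which tends to 0 by dominated convergence.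
-/

open Matrix Real MeasureTheory Filter

open scoped ENNReal Topology

section Summation

variable {ι α : Type*}

theorem existsUnique_mem_of_tsum_indicator_eq_one {u : ι → α} {s : Set α}
    (h : ∑' i, s.indicator (fun _ => (1 : ℝ)) (u i) = 1) : ∃! i, u i ∈ s := by
  set F : ι → ℝ := fun i => s.indicator (fun _ => (1 : ℝ)) (u i)
  have hF : Summable F := by
    by_contra hF
    rw [tsum_eq_zero_of_not_summable hF] at h
    exact zero_ne_one h
  obtain ⟨i, hi⟩ : ∃ i, u i ∈ s := by
    by_contra! hs
    simp [F, Set.indicator_of_notMem (hs _)] at h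
  refine ⟨i, hi, fun j hj => ?_⟩
  classical
  by_contra hji
  have hpair : ∑ l ∈ {j, i}, F l ≤ ∑' l, F l :=
    hF.sum_le_tsum _ fun l _ => Set.indicator_nonneg (fun _ _ => zero_le_one) _
  rw [Finset.sum_pair hji, h] at hpair
  simp only [F, Set.indicator_of_mem hi, Set.indicator_of_mem hj] at hpair
  norm_num at hpair

end Summation

section Reindexing

variable {G A M : Type*} [AddGroup G] [AddCommGroup A] [AddCommMonoid M] [TopologicalSpace M]
  {φ : G →+ A}

instance [Countable G] (φ : G →+ A) : Countable φ.range :=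
  (Set.countable_range φ).to_subtype

theorem tsum_vadd_range_eq_tsum_add (hφ : Function.Injective φ) (F : A → M) (x : A) :
    ∑' a : φ.range, F (a +ᵥ x) = ∑' g, F (x + φ g) := by
  rw [← (AddMonoidHom.ofInjective hφ).toEquiv.tsum_eq]
  simp [AddSubgroup.vadd_def, AddMonoidHom.ofInjective_apply, add_comm]

theorem tsum_vadd_range_eq_tsum_sub (hφ : Function.Injective φ) (F : A → M) (x : A) :
    ∑' a : φ.range, F (a +ᵥ x) = ∑' g, F (x - φ g) := by
  rw [tsum_vadd_range_eq_tsum_add hφ, ← (Equiv.neg G).tsum_eq]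
  simp [sub_eq_add_neg]

theorem isAddFundamentalDomain_range_of_tsum_indicator_eq_one [MeasurableSpace A]
    {μ : Measure A} (hφ : Function.Injective φ) {s : Set A} (hs : NullMeasurableSet s μ)
    (h : ∀ x, ∑' g, s.indicator (fun _ => (1 : ℝ)) (x + φ g) = 1) :
    IsAddFundamentalDomain φ.range s μ :=
  .mk' hs fun x => existsUnique_mem_of_tsum_indicator_eq_one <| by
    rw [tsum_vadd_range_eq_tsum_add hφ]
    exact h x

end Reindexing

namespace MeasureTheory.IsAddFundamentalDomain

variable {G α E : Type*} [AddGroup G] [Countable G] [AddAction G α] [MeasurableSpace α]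
  [MeasurableConstVAdd G α] {μ : Measure α} [VAddInvariantMeasure G α μ] {s : Set α}
  [NormedAddCommGroup E] [NormedSpace ℝ E]

theorem integral_eq_setIntegral_tsum (h : IsAddFundamentalDomain G s μ) {f : α → E}
    (hf : Integrable f μ) : ∫ x, f x ∂μ = ∫ x in s, ∑' g : G, f (g +ᵥ x) ∂μ := by
  rw [h.integral_eq_tsum'' f hf, integral_tsum]
  · exact fun g => (hf.1.comp_measurePreserving (measurePreserving_vadd g μ)).restrict
  · rw [← h.lintegral_eq_tsum'' fun x => ‖f x‖ₑ]
    exact hf.2.ne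

theorem norm_integral_mul_le_setIntegral_one_sub_tsum (h : IsAddFundamentalDomain G s μ)
    (hs : μ s ≠ ∞) {f : α → ℝ} (hf : Measurable f) (hf0 : 0 ≤ f)
    (hP : ∀ᵐ x ∂μ.restrict s, ∑' g : G, f (g +ᵥ x) ≤ 1) {e : α → ℂ}
    (he : AEStronglyMeasurable e μ) (he_inv : ∀ (g : G) x, e (g +ᵥ x) = e x)
    (he_norm : ∀ x, ‖e x‖ ≤ 1) (he0 : ∫ x in s, e x ∂μ = 0) :
    ‖∫ x, (f x : ℂ) * e x ∂μ‖ ≤ ∫ x in s, (1 - ∑' g : G, f (g +ᵥ x)) ∂μ := by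
  set P : α → ℝ := fun x => ∑' g : G, f (g +ᵥ x)
  have hPm : Measurable P := Measurable.tsum fun g : G => hf.comp (measurable_const_vadd g)
  have hP0 : ∀ x, 0 ≤ P x := fun x => tsum_nonneg fun g => hf0 (g +ᵥ x)
  have hbound : ∀ᵐ x ∂μ.restrict s, ‖((P x : ℂ) - 1) * e x‖ ≤ 1 - P x := by
    filter_upwards [hP] with x hx
    calc ‖((P x : ℂ) - 1) * e x‖ ≤ ‖((P x - 1 : ℝ) : ℂ)‖ := by
          push_cast
          simpa [norm_mul] using mul_le_of_le_one_right (norm_nonneg _) (he_norm x)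
      _ = 1 - P x := by
          rw [Complex.norm_real, Real.norm_eq_abs, abs_sub_comm, abs_of_nonneg (sub_nonneg.2 hx)]
  have hdefect : IntegrableOn (fun x => 1 - P x) s μ :=
    Measure.integrableOn_of_bounded hs (measurable_const.sub hPm).aestronglyMeasurable
      (M := 1) <| by
      filter_upwards [hP] with x hx
      rw [Real.norm_eq_abs, abs_of_nonneg (sub_nonneg.2 hx)]
      linarith [hP0 x]
  by_cases hint : Integrable (fun x => (f x : ℂ) * e x) μ
  swap
  · rw [integral_undef hint, norm_zero]
    refine integral_nonneg_of_ae ?_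
    filter_upwards [hP] with x hx
    exact sub_nonneg.2 hx
  have hPe : IntegrableOn (fun x => ((P x : ℂ) - 1) * e x) s μ :=
    Measure.integrableOn_of_bounded hs
      (((Complex.measurable_ofReal.comp hPm).sub measurable_const).aestronglyMeasurable.mul he)
      (M := 1) <| by
      filter_upwards [hbound] with x hx
      linarith [hP0 x]
  have he_int : IntegrableOn e s μ :=
    Measure.integrableOn_of_bounded hs he (M := 1) (ae_of_all _ he_norm)
  have hunfold : ∫ x, (f x : ℂ) * e x ∂μ = ∫ x in s, ((P x : ℂ) - 1) * e x ∂μ :=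
    calc ∫ x, (f x : ℂ) * e x ∂μ = ∫ x in s, (P x : ℂ) * e x ∂μ := by
          simp_rw [h.integral_eq_setIntegral_tsum hint, he_inv, tsum_mul_right, P,
            Complex.ofReal_tsum]
      _ = ∫ x in s, (((P x : ℂ) - 1) * e x + e x) ∂μ := by simp_rw [sub_one_mul, sub_add_cancel]
      _ = ∫ x in s, ((P x : ℂ) - 1) * e x ∂μ := by rw [integral_add hPe he_int, he0, add_zero]
  rw [hunfold]
  exact norm_integral_le_of_norm_le hdefect hbound

end MeasureTheory.IsAddFundamentalDomain

theorem tendsto_setIntegral_one_sub {α ι : Type*} [MeasurableSpace α] {μ : Measure α} {s : Set α}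
    (hs : μ s ≠ ∞) {l : Filter ι} [l.IsCountablyGenerated] {F : ι → α → ℝ}
    (hF : ∀ i, AEStronglyMeasurable (F i) μ) (hF01 : ∀ i, ∀ᵐ x ∂μ.restrict s, F i x ∈ Set.Icc 0 1)
    (hlim : ∀ᵐ x ∂μ.restrict s, Tendsto (F · x) l (𝓝 1)) :
    Tendsto (fun i => ∫ x in s, (1 - F i x) ∂μ) l (𝓝 0) := by
  have hlim0 := tendsto_integral_filter_of_dominated_convergence (μ := μ.restrict s)
    (F := fun i x => 1 - F i x) (fun _ => 1)
    (.of_forall fun i => (aestronglyMeasurable_const.sub (hF i)).restrict)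
    (.of_forall fun i => by
      filter_upwards [hF01 i] with x hx
      rw [Real.norm_eq_abs, abs_of_nonneg (sub_nonneg.2 hx.2)]
      linarith [hx.1])
    (integrable_const_iff.2 (Or.inr (by simpa [isFiniteMeasure_restrict] using hs)))
    (by filter_upwards [hlim] with x hx; simpa using hx.const_sub 1)
  simpa using hlim0

theorem setIntegral_eq_zero_of_antiperiodic {E F : Type*} [AddCommGroup E] [MeasurableSpace E]
    [MeasurableAdd E] {μ : Measure E} [μ.IsAddLeftInvariant] {Λ : AddSubgroup E} [Countable Λ]
    {s : Set E} (h : IsAddFundamentalDomain Λ s μ) [NormedAddCommGroup F] [NormedSpace ℝ F]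
    {e : E → F} (hper : ∀ p ∈ Λ, Function.Periodic e p) {t : E} (ht : Function.Antiperiodic e t) :
    ∫ x in s, e x ∂μ = 0 := by
  have hs' : IsAddFundamentalDomain Λ ((t +ᵥ ·) ⁻¹' s) μ := by
    rw [Set.preimage_vadd]
    exact h.vadd_of_comm (-t)
  have hneg : ∫ x in s, e x ∂μ = -∫ x in s, e x ∂μ :=
    calc ∫ x in s, e x ∂μ = ∫ x in (t +ᵥ ·) ⁻¹' s, e x ∂μ :=
          h.setIntegral_eq hs' fun p x => by
            rw [AddSubgroup.vadd_def, vadd_eq_add, add_comm]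
            exact hper p p.2 x
      _ = ∫ x in (t +ᵥ ·) ⁻¹' s, -e (t +ᵥ x) ∂μ := by
          congr 1 with x
          rw [vadd_eq_add, add_comm, ht, neg_neg]
      _ = -∫ x in s, e x ∂μ := by
          rw [integral_neg, (measurePreserving_vadd t μ).setIntegral_preimage_emb
            (measurableEmbedding_const_vadd t)]
  rw [eq_neg_iff_add_eq_zero, ← two_smul ℝ, smul_eq_zero] at hneg
  exact hneg.resolve_left two_ne_zero

theorem periodic_cexp_neg_I_mul_dotProduct {n : Type*} [Fintype n] {v p : n → ℝ} {m : ℤ}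
    (h : v ⬝ᵥ p = 2 * π * m) :
    Function.Periodic (fun x => Complex.exp (-(Complex.I * ((v ⬝ᵥ x : ℝ) : ℂ)))) p := by
  intro x
  convert Complex.exp_periodic.int_mul (-m) (-(Complex.I * ((v ⬝ᵥ x : ℝ) : ℂ))) using 2
  rw [dotProduct_add, h]
  push_cast
  ring

theorem antiperiodic_cexp_neg_I_mul_dotProduct {n : Type*} [Fintype n] {v t : n → ℝ}
    (h : v ⬝ᵥ t = π) :
    Function.Antiperiodic (fun x => Complex.exp (-(Complex.I * ((v ⬝ᵥ x : ℝ) : ℂ)))) t := by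
  intro x
  convert Complex.exp_antiperiodic.neg (-(Complex.I * ((v ⬝ᵥ x : ℝ) : ℂ))) using 2
  rw [dotProduct_add, h]
  push_cast
  ring

section ReciprocalLattice

variable {n : Type*} [Fintype n] [DecidableEq n] (B : Matrix n n ℝ)

noncomputable def reciprocalLatticeHom : (n → ℤ) →+ (n → ℝ) :=
  AddMonoidHom.mk' (fun l => (2 * π) • (B.transpose)⁻¹.mulVec (fun i => (l i : ℝ))) fun a b => by
    simp only [Pi.add_apply, Int.cast_add, ← smul_add, ← mulVec_add]
    rfl

theorem reciprocalLatticeHom_apply (l : n → ℤ) :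
    reciprocalLatticeHom B l = (2 * π) • (B.transpose)⁻¹.mulVec (fun i => (l i : ℝ)) := rfl

variable {B}

theorem reciprocalLatticeHom_injective (hB : IsUnit B.det) :
    Function.Injective (reciprocalLatticeHom B) := by
  have hBt : IsUnit (B.transpose)⁻¹ := by
    rwa [isUnit_nonsing_inv_iff, isUnit_iff_isUnit_det, det_transpose]
  intro a b hab
  have := mulVec_injective_iff_isUnit.2 hBt
    (smul_right_injective _ (by positivity : (2 * π : ℝ) ≠ 0) hab)
  funext i
  exact_mod_cast congrFun this i

theorem mulVec_dotProduct_reciprocalLatticeHom (hB : IsUnit B.det) (k l : n → ℤ) :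
    B.mulVec (fun i => (k i : ℝ)) ⬝ᵥ reciprocalLatticeHom B l = 2 * π * ((k ⬝ᵥ l : ℤ) : ℝ) := by
  rw [reciprocalLatticeHom_apply, dotProduct_smul, dotProduct_mulVec, ← transpose_nonsing_inv,
    vecMul_transpose, mulVec_mulVec, nonsing_inv_mul B hB, one_mulVec, smul_eq_mul]
  simp [dotProduct]

theorem periodic_cexp_neg_I_mul_mulVec_dotProduct (hB : IsUnit B.det) (k : n → ℤ) {p : n → ℝ}
    (hp : p ∈ (reciprocalLatticeHom B).range) :
    Function.Periodic
      (fun x => Complex.exp (-(Complex.I * ((B.mulVec (fun i => (k i : ℝ)) ⬝ᵥ x : ℝ) : ℂ)))) p := by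
  obtain ⟨l, rfl⟩ := hp
  exact periodic_cexp_neg_I_mul_dotProduct (mulVec_dotProduct_reciprocalLatticeHom hB k l)

theorem setIntegral_cexp_neg_I_mul_mulVec_dotProduct_eq_zero (hB : IsUnit B.det) {k : n → ℤ}
    (hk : k ≠ 0) {Ω : Set (n → ℝ)}
    (hΩ : IsAddFundamentalDomain (reciprocalLatticeHom B).range Ω volume) :
    ∫ x in Ω, Complex.exp (-(Complex.I * ((B.mulVec (fun i => (k i : ℝ)) ⬝ᵥ x : ℝ) : ℂ))) = 0 := by
  set v := B.mulVec fun i => (k i : ℝ)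
  have hv : v ≠ 0 := fun hv => hk <| funext fun i => by
    simpa using congrFun (mulVec_injective_iff_isUnit.2 ((isUnit_iff_isUnit_det B).2 hB)
      (hv.trans (mulVec_zero B).symm)) i
  have hvt : v ⬝ᵥ ((π / (v ⬝ᵥ v)) • v) = π := by
    rw [dotProduct_smul, smul_eq_mul, div_mul_cancel₀ _ (dotProduct_self_eq_zero.not.2 hv)]
  exact setIntegral_eq_zero_of_antiperiodic hΩ
    (fun _ => periodic_cexp_neg_I_mul_mulVec_dotProduct hB k)
    (antiperiodic_cexp_neg_I_mul_dotProduct hvt)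

end ReciprocalLattice

theorem stmt_14_general (d : ℕ) (B : Matrix (Fin d) (Fin d) ℝ)
    (hB : IsUnit B.det) (Ω : Set (Fin d → ℝ))
    (hΩmeas : MeasurableSet Ω) (hΩbdd : Bornology.IsBounded Ω)
    (hfund : ∀ x : Fin d → ℝ,
      (∑' k : Fin d → ℤ,
        Set.indicator Ω (fun _ => (1 : ℝ))
          (x + (2 * π) • (B.transpose)⁻¹.mulVec (fun i => (k i : ℝ)))) = 1)
    (g : ℕ → (Fin d → ℝ) → ℝ)
    (hgmeas : ∀ n, Measurable (g n))
    (hg01 : ∀ n, ∀ ω, g n ω ∈ Set.Icc (0 : ℝ) 1)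
    (hG : ∀ᵐ ω : Fin d → ℝ ∂volume,
      (∀ n : ℕ,
        (∑' l : Fin d → ℤ,
          g n (ω - (2 * π) • (B.transpose)⁻¹.mulVec (fun i => (l i : ℝ)))) ≤ 1) ∧
      Tendsto (fun n : ℕ =>
          ∑' l : Fin d → ℤ,
            g n (ω - (2 * π) • (B.transpose)⁻¹.mulVec (fun i => (l i : ℝ))))
        atTop (nhds 1)) :
    ∀ k : Fin d → ℤ, k ≠ 0 →
      Tendsto (fun n : ℕ =>
          ∫ ω : Fin d → ℝ,
            (g n ω : ℂ) *
              Complex.exp (-(Complex.I *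
                ((B.mulVec (fun i => (k i : ℝ)) ⬝ᵥ ω : ℝ) : ℂ))))
        atTop (nhds 0) := by
  intro k hk
  have hinj := reciprocalLatticeHom_injective hB
  have hΩ : IsAddFundamentalDomain (reciprocalLatticeHom B).range Ω volume :=
    isAddFundamentalDomain_range_of_tsum_indicator_eq_one hinj hΩmeas.nullMeasurableSet hfund
  have hΩfin : volume Ω ≠ ∞ := hΩbdd.measure_lt_top.ne
  simp_rw [← reciprocalLatticeHom_apply, ← tsum_vadd_range_eq_tsum_sub hinj] at hG
  refine squeeze_zero_norm (fun n => ?_) (tendsto_setIntegral_one_sub hΩfin (fun n => ?_)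
    (fun n => ?_) (ae_restrict_of_ae (hG.mono fun x hx => hx.2)))
  · refine hΩ.norm_integral_mul_le_setIntegral_one_sub_tsum hΩfin (hgmeas n) (fun x => (hg01 n x).1)
      (ae_restrict_of_ae (hG.mono fun x hx => hx.1 n)) (by fun_prop) (fun a x => ?_)
      (fun x => by simp [Complex.norm_exp])
      (setIntegral_cexp_neg_I_mul_mulVec_dotProduct_eq_zero hB hk hΩ)
    rw [AddSubgroup.vadd_def, vadd_eq_add, add_comm]
    exact periodic_cexp_neg_I_mul_mulVec_dotProduct hB k a.2 x
  · exact (Measurable.tsum fun a => (hgmeas n).comp (measurable_const_vadd a)).aestronglyMeasurable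
  · filter_upwards [ae_restrict_of_ae hG] with x hx
    exact ⟨tsum_nonneg fun a => (hg01 n _).1, hx.1 n⟩

/-- Let `d ≥ 1`, `B` an invertible real `d×d` matrix, and `Ω ⊂ ℝ^d` a bounded
measurable fundamental domain of the lattice `2π(Bᵀ)⁻¹ℤ^d`. Let `g n : ℝ^d → [0,1]` be
measurable functions such that for almost every `ω` the periodizations
`G n ω = ∑_{l∈ℤ^d} g n (ω − 2π(Bᵀ)⁻¹l)` satisfy `G n ω ≤ 1` for all `n` and `G n ω → 1`.
Then for every nonzero `k ∈ ℤ^d`, `∫ g n (ω) e^{−i(Bk)·ω} dω → 0` as `n → ∞`. -/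
theorem stmt_14 (d : ℕ) (hd : 1 ≤ d) (B : Matrix (Fin d) (Fin d) ℝ)
    (hB : IsUnit B.det) (Ω : Set (Fin d → ℝ))
    (hΩmeas : MeasurableSet Ω) (hΩbdd : Bornology.IsBounded Ω)
    (hfund : ∀ x : Fin d → ℝ,
      (∑' k : Fin d → ℤ,
        Set.indicator Ω (fun _ => (1 : ℝ))
          (x + (2 * π) • (B.transpose)⁻¹.mulVec (fun i => (k i : ℝ)))) = 1)
    (g : ℕ → (Fin d → ℝ) → ℝ)
    (hgmeas : ∀ n, Measurable (g n))
    (hg01 : ∀ n, ∀ ω, g n ω ∈ Set.Icc (0 : ℝ) 1)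
    (hG : ∀ᵐ ω : Fin d → ℝ ∂volume,
      (∀ n : ℕ,
        (∑' l : Fin d → ℤ,
          g n (ω - (2 * π) • (B.transpose)⁻¹.mulVec (fun i => (l i : ℝ)))) ≤ 1) ∧
      Tendsto (fun n : ℕ =>
          ∑' l : Fin d → ℤ,
            g n (ω - (2 * π) • (B.transpose)⁻¹.mulVec (fun i => (l i : ℝ))))
        atTop (nhds 1)) :
    ∀ k : Fin d → ℤ, k ≠ 0 →
      Tendsto (fun n : ℕ =>
          ∫ ω : Fin d → ℝ,
            (g n ω : ℂ) *
              Complex.exp (-(Complex.I *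
                ((B.mulVec (fun i => (k i : ℝ)) ⬝ᵥ ω : ℝ) : ℂ))))
        atTop (nhds 0) :=
  stmt_14_general d B hB Ω hΩmeas hΩbdd hfund g hgmeas hg01 hG
end
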